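/- arXiv:2401.10781 — 7 statements merged into one kernel-verified Lean document; each statement's English description precedes it below -/
import Mathlib

section
/- Persistence: for any timed HT-trace ⟨H,T,τ⟩, any metric (temporal) formula φ and any k, if ⟨H,T,τ⟩,k ⊨ φ then ⟨T,T,τ⟩,k ⊨ φ. -/
/-- Metric (temporal) formulas over atoms `A`, with intervals as sets of integers. -/
inductive MF (A : Type) : Type
  | atom  : A → MF A
  | bot   : MF A
  | init  : MF A
  | fin   : MF A
  | conj  : MF A → MF A → MF A
  | disj  : MF A → MF A → MF A
  | impl  : MF A → MF A → MF A
  | next  : Set ℤ → MF A → MF A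
  | wnext : Set ℤ → MF A → MF A
  | evtl  : Set ℤ → MF A → MF A
  | alw   : Set ℤ → MF A → MF A
  | untl  : Set ℤ → MF A → MF A → MF A
  | rel   : Set ℤ → MF A → MF A → MF A
  | prev  : Set ℤ → MF A → MF A
  | wprev : Set ℤ → MF A → MF A
  | evtlP : Set ℤ → MF A → MF A
  | alwP  : Set ℤ → MF A → MF A
  | snce  : Set ℤ → MF A → MF A → MF A
  | trig  : Set ℤ → MF A → MF A → MF A

/-- MDHT (here-and-there) satisfaction on a timed HT-trace `⟨H,T,τ⟩` of length `lam`. -/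
def SatHT {A : Type} (τ : ℕ → ℤ) (lam : ℕ) :
    (ℕ → Set A) → (ℕ → Set A) → ℕ → MF A → Prop
  | H, _, k, .atom a => a ∈ H k
  | _, _, _, .bot => False
  | _, _, k, .init => k = 0
  | _, _, k, .fin => k + 1 = lam
  | H, T, k, .conj φ ψ => SatHT τ lam H T k φ ∧ SatHT τ lam H T k ψ
  | H, T, k, .disj φ ψ => SatHT τ lam H T k φ ∨ SatHT τ lam H T k ψ
  | H, T, k, .impl φ ψ =>
      (SatHT τ lam H T k φ → SatHT τ lam H T k ψ) ∧
      (SatHT τ lam T T k φ → SatHT τ lam T T k ψ)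
  | H, T, k, .next I φ => k + 1 < lam ∧ SatHT τ lam H T (k+1) φ ∧ τ (k+1) - τ k ∈ I
  | H, T, k, .wnext I φ =>
      (k + 1 = lam ∨ SatHT τ lam H T (k+1) φ ∨ τ (k+1) - τ k ∉ I) ∧
      (k + 1 = lam ∨ SatHT τ lam T T (k+1) φ ∨ τ (k+1) - τ k ∉ I)
  | H, T, k, .evtl I φ => ∃ i, k ≤ i ∧ i < lam ∧ τ i - τ k ∈ I ∧ SatHT τ lam H T i φ
  | H, T, k, .alw I φ =>
      (∀ i, k ≤ i → i < lam → τ i - τ k ∈ I → SatHT τ lam H T i φ) ∧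
      (∀ i, k ≤ i → i < lam → τ i - τ k ∈ I → SatHT τ lam T T i φ)
  | H, T, k, .untl I φ ψ =>
      ∃ j, k ≤ j ∧ j < lam ∧ τ j - τ k ∈ I ∧ SatHT τ lam H T j ψ ∧
        ∀ i, k ≤ i → i < j → SatHT τ lam H T i φ
  | H, T, k, .rel I φ ψ =>
      (∀ j, k ≤ j → j < lam → τ j - τ k ∈ I →
        (SatHT τ lam H T j ψ ∨ ∃ i, k ≤ i ∧ i < j ∧ SatHT τ lam H T i φ)) ∧
      (∀ j, k ≤ j → j < lam → τ j - τ k ∈ I →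
        (SatHT τ lam T T j ψ ∨ ∃ i, k ≤ i ∧ i < j ∧ SatHT τ lam T T i φ))
  | H, T, k, .prev I φ => 0 < k ∧ SatHT τ lam H T (k-1) φ ∧ τ k - τ (k-1) ∈ I
  | H, T, k, .wprev I φ =>
      (k = 0 ∨ SatHT τ lam H T (k-1) φ ∨ τ k - τ (k-1) ∉ I) ∧
      (k = 0 ∨ SatHT τ lam T T (k-1) φ ∨ τ k - τ (k-1) ∉ I)
  | H, T, k, .evtlP I φ => ∃ i, i ≤ k ∧ τ k - τ i ∈ I ∧ SatHT τ lam H T i φ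
  | H, T, k, .alwP I φ =>
      (∀ i, i ≤ k → τ k - τ i ∈ I → SatHT τ lam H T i φ) ∧
      (∀ i, i ≤ k → τ k - τ i ∈ I → SatHT τ lam T T i φ)
  | H, T, k, .snce I φ ψ =>
      ∃ j, j ≤ k ∧ τ k - τ j ∈ I ∧ SatHT τ lam H T j ψ ∧
        ∀ i, j < i → i ≤ k → SatHT τ lam H T i φ
  | H, T, k, .trig I φ ψ =>
      (∀ j, j ≤ k → τ k - τ j ∈ I →
        (SatHT τ lam H T j ψ ∨ ∃ i, j < i ∧ i ≤ k ∧ SatHT τ lam H T i φ)) ∧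
      (∀ j, j ≤ k → τ k - τ j ∈ I →
        (SatHT τ lam T T j ψ ∨ ∃ i, j < i ∧ i ≤ k ∧ SatHT τ lam T T i φ))

/-- Classical (MDL) satisfaction on a timed trace `⟨T,τ⟩` of length `lam`. -/
def SatC {A : Type} (τ : ℕ → ℤ) (lam : ℕ) (T : ℕ → Set A) : ℕ → MF A → Prop
  | k, .atom a => a ∈ T k
  | _, .bot => False
  | k, .init => k = 0
  | k, .fin => k + 1 = lam
  | k, .conj φ ψ => SatC τ lam T k φ ∧ SatC τ lam T k ψ
  | k, .disj φ ψ => SatC τ lam T k φ ∨ SatC τ lam T k ψ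
  | k, .impl φ ψ => SatC τ lam T k φ → SatC τ lam T k ψ
  | k, .next I φ => k + 1 < lam ∧ SatC τ lam T (k+1) φ ∧ τ (k+1) - τ k ∈ I
  | k, .wnext I φ => k + 1 = lam ∨ SatC τ lam T (k+1) φ ∨ τ (k+1) - τ k ∉ I
  | k, .evtl I φ => ∃ i, k ≤ i ∧ i < lam ∧ τ i - τ k ∈ I ∧ SatC τ lam T i φ
  | k, .alw I φ => ∀ i, k ≤ i → i < lam → τ i - τ k ∈ I → SatC τ lam T i φ
  | k, .untl I φ ψ =>
      ∃ j, k ≤ j ∧ j < lam ∧ τ j - τ k ∈ I ∧ SatC τ lam T j ψ ∧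
        ∀ i, k ≤ i → i < j → SatC τ lam T i φ
  | k, .rel I φ ψ =>
      ∀ j, k ≤ j → j < lam → τ j - τ k ∈ I →
        (SatC τ lam T j ψ ∨ ∃ i, k ≤ i ∧ i < j ∧ SatC τ lam T i φ)
  | k, .prev I φ => 0 < k ∧ SatC τ lam T (k-1) φ ∧ τ k - τ (k-1) ∈ I
  | k, .wprev I φ => k = 0 ∨ SatC τ lam T (k-1) φ ∨ τ k - τ (k-1) ∉ I
  | k, .evtlP I φ => ∃ i, i ≤ k ∧ τ k - τ i ∈ I ∧ SatC τ lam T i φ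
  | k, .alwP I φ => ∀ i, i ≤ k → τ k - τ i ∈ I → SatC τ lam T i φ
  | k, .snce I φ ψ =>
      ∃ j, j ≤ k ∧ τ k - τ j ∈ I ∧ SatC τ lam T j ψ ∧
        ∀ i, j < i → i ≤ k → SatC τ lam T i φ
  | k, .trig I φ ψ =>
      ∀ j, j ≤ k → τ k - τ j ∈ I →
        (SatC τ lam T j ψ ∨ ∃ i, j < i ∧ i ≤ k ∧ SatC τ lam T i φ)

/-- Persistence: HT satisfaction implies satisfaction in the total trace `⟨T,T,τ⟩`. -/
theorem persistence {A : Type} (H T : ℕ → Set A) (τ : ℕ → ℤ) (lam : ℕ)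
    (hτ : Monotone τ) (hHT : ∀ i, H i ⊆ T i) (φ : MF A) (k : ℕ)
    (h : SatHT τ lam H T k φ) :
    SatHT τ lam T T k φ := by
  induction φ generalizing k with
  | atom a => exact hHT k h
  | bot => exact h
  | init => exact h
  | fin => exact h
  | conj φ ψ ihφ ihψ => exact ⟨ihφ _ h.1, ihψ _ h.2⟩
  | disj φ ψ ihφ ihψ => exact h.elim (fun x => Or.inl (ihφ _ x)) (fun x => Or.inr (ihψ _ x))
  | impl φ ψ _ _ => exact ⟨h.2, h.2⟩
  | next I φ ih => exact ⟨h.1, ih _ h.2.1, h.2.2⟩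
  | wnext I φ _ => exact ⟨h.2, h.2⟩
  | evtl I φ ih => obtain ⟨i, h1, h2, h3, h4⟩ := h; exact ⟨i, h1, h2, h3, ih _ h4⟩
  | alw I φ _ => exact ⟨h.2, h.2⟩
  | untl I φ ψ ihφ ihψ =>
      obtain ⟨j, h1, h2, h3, h4, h5⟩ := h
      exact ⟨j, h1, h2, h3, ihψ _ h4, fun i hi hij => ihφ _ (h5 i hi hij)⟩
  | rel I φ ψ _ _ => exact ⟨h.2, h.2⟩
  | prev I φ ih => exact ⟨h.1, ih _ h.2.1, h.2.2⟩
  | wprev I φ _ => exact ⟨h.2, h.2⟩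
  | evtlP I φ ih => obtain ⟨i, h1, h2, h3⟩ := h; exact ⟨i, h1, h2, ih _ h3⟩
  | alwP I φ _ => exact ⟨h.2, h.2⟩
  | snce I φ ψ ihφ ihψ =>
      obtain ⟨j, h1, h2, h3, h4⟩ := h
      exact ⟨j, h1, h2, ihψ _ h3, fun i a b => ihφ _ (h4 i a b)⟩
  | trig I φ ψ _ _ => exact ⟨h.2, h.2⟩
end

section
/- A metric formula φ is satisfiable in the HT semantics (MDHT) if and only if it is satisfiable in the classical semantics (MDL): φ has some timed HT-trace model iff it has some total timed trace model. -/
lemma satHT_total {A : Type} (τ : ℕ → ℤ) (lam : ℕ) (T : ℕ → Set A) (φ : MF A) :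
    ∀ k, SatHT τ lam T T k φ ↔ SatC τ lam T k φ := by
  induction φ with
  | atom a => intro k; rfl
  | bot => intro k; rfl
  | init => intro k; rfl
  | fin => intro k; rfl
  | conj φ ψ ih1 ih2 => intro k; simp only [SatHT, SatC, ih1, ih2]
  | disj φ ψ ih1 ih2 => intro k; simp only [SatHT, SatC, ih1, ih2]
  | impl φ ψ ih1 ih2 => intro k; simp only [SatHT, SatC, ih1, ih2, and_self]
  | next I φ ih => intro k; simp only [SatHT, SatC, ih]
  | wnext I φ ih => intro k; simp only [SatHT, SatC, ih, and_self]
  | evtl I φ ih => intro k; simp only [SatHT, SatC, ih]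
  | alw I φ ih => intro k; simp only [SatHT, SatC, ih, and_self]
  | untl I φ ψ ih1 ih2 => intro k; simp only [SatHT, SatC, ih1, ih2]
  | rel I φ ψ ih1 ih2 => intro k; simp only [SatHT, SatC, ih1, ih2, and_self]
  | prev I φ ih => intro k; simp only [SatHT, SatC, ih]
  | wprev I φ ih => intro k; simp only [SatHT, SatC, ih, and_self]
  | evtlP I φ ih => intro k; simp only [SatHT, SatC, ih]
  | alwP I φ ih => intro k; simp only [SatHT, SatC, ih, and_self]
  | snce I φ ψ ih1 ih2 => intro k; simp only [SatHT, SatC, ih1, ih2]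
  | trig I φ ψ ih1 ih2 => intro k; simp only [SatHT, SatC, ih1, ih2, and_self]

lemma satHT_persist {A : Type} {τ : ℕ → ℤ} {lam : ℕ} {H T : ℕ → Set A}
    (hs : ∀ i, H i ⊆ T i) (φ : MF A) :
    ∀ k, SatHT τ lam H T k φ → SatHT τ lam T T k φ := by
  induction φ with
  | atom a => intro k h; exact hs k h
  | bot => intro k h; exact h
  | init => intro k h; exact h
  | fin => intro k h; exact h
  | conj φ ψ ih1 ih2 => intro k h; exact ⟨ih1 k h.1, ih2 k h.2⟩
  | disj φ ψ ih1 ih2 => intro k h; exact h.imp (ih1 k) (ih2 k)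
  | impl φ ψ ih1 ih2 => intro k h; exact ⟨h.2, h.2⟩
  | next I φ ih => intro k h; exact ⟨h.1, ih _ h.2.1, h.2.2⟩
  | wnext I φ ih => intro k h; exact ⟨h.2, h.2⟩
  | evtl I φ ih =>
      intro k h; obtain ⟨i, h1, h2, h3, h4⟩ := h; exact ⟨i, h1, h2, h3, ih i h4⟩
  | alw I φ ih => intro k h; exact ⟨h.2, h.2⟩
  | untl I φ ψ ih1 ih2 =>
      intro k h; obtain ⟨j, h1, h2, h3, h4, h5⟩ := h
      exact ⟨j, h1, h2, h3, ih2 j h4, fun i hi hj => ih1 i (h5 i hi hj)⟩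
  | rel I φ ψ ih1 ih2 => intro k h; exact ⟨h.2, h.2⟩
  | prev I φ ih => intro k h; exact ⟨h.1, ih _ h.2.1, h.2.2⟩
  | wprev I φ ih => intro k h; exact ⟨h.2, h.2⟩
  | evtlP I φ ih =>
      intro k h; obtain ⟨i, h1, h2, h3⟩ := h; exact ⟨i, h1, h2, ih i h3⟩
  | alwP I φ ih => intro k h; exact ⟨h.2, h.2⟩
  | snce I φ ψ ih1 ih2 =>
      intro k h; obtain ⟨j, h1, h2, h3, h4⟩ := h
      exact ⟨j, h1, h2, ih2 j h3, fun i hi hj => ih1 i (h4 i hi hj)⟩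
  | trig I φ ψ ih1 ih2 => intro k h; exact ⟨h.2, h.2⟩

/-- A metric formula is MDHT satisfiable iff it is MDL satisfiable. -/
theorem mdht_sat_iff_mdl_sat {A : Type} (φ : MF A) :
    (∃ (lam : ℕ) (τ : ℕ → ℤ) (H T : ℕ → Set A),
        Monotone τ ∧ (∀ i, H i ⊆ T i) ∧ SatHT τ lam H T 0 φ) ↔
    (∃ (lam : ℕ) (τ : ℕ → ℤ) (T : ℕ → Set A),
        Monotone τ ∧ SatC τ lam T 0 φ) := by
  constructor
  · rintro ⟨lam, τ, H, T, hmono, hs, hsat⟩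
    exact ⟨lam, τ, T, hmono, (satHT_total τ lam T φ 0).mp (satHT_persist hs φ 0 hsat)⟩
  · rintro ⟨lam, τ, T, hmono, hsat⟩
    exact ⟨lam, τ, T, T, hmono, fun i => le_refl _,
      (satHT_total τ lam T φ 0).mpr hsat⟩
end

section
/- For implication-free (unconditional) metric formulas φ and ψ, φ and ψ are equivalent in the classical semantics MDL if and only if they are equivalent in the HT semantics MDHT. -/
/-- Unconditional (implication-free, hence negation-free) metric formulas:
atoms, ⊥, ∧, ∨ and the metric modalities ◯_I, ◇_I, U_I, •_I, ◆_I, S_I. -/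
def ImplFree {A : Type} : MF A → Prop
  | .atom _ => True
  | .bot => True
  | .conj φ ψ => ImplFree φ ∧ ImplFree ψ
  | .disj φ ψ => ImplFree φ ∧ ImplFree ψ
  | .next _ φ => ImplFree φ
  | .evtl _ φ => ImplFree φ
  | .untl _ φ ψ => ImplFree φ ∧ ImplFree ψ
  | .prev _ φ => ImplFree φ
  | .evtlP _ φ => ImplFree φ
  | .snce _ φ ψ => ImplFree φ ∧ ImplFree ψ
  | _ => False


lemma implfree_satHT_iff_satC {A : Type} (τ : ℕ → ℤ) (lam : ℕ)
    (H T : ℕ → Set A) : ∀ (φ : MF A), ImplFree φ → ∀ k,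
    (SatHT τ lam H T k φ ↔ SatC τ lam H k φ) := by
  intro φ
  induction φ with
  | atom a => intro _ k; simp [SatHT, SatC]
  | bot => intro _ k; simp [SatHT, SatC]
  | conj φ ψ ihφ ihψ =>
    intro h k
    simp [SatHT, SatC, ihφ h.1, ihψ h.2]
  | disj φ ψ ihφ ihψ =>
    intro h k
    simp [SatHT, SatC, ihφ h.1, ihψ h.2]
  | next I φ ih =>
    intro h k
    simp [SatHT, SatC, ih h]
  | evtl I φ ih =>
    intro h k
    simp [SatHT, SatC, ih h]
  | untl I φ ψ ihφ ihψ =>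
    intro h k
    simp [SatHT, SatC, ihφ h.1, ihψ h.2]
  | prev I φ ih =>
    intro h k
    simp [SatHT, SatC, ih h]
  | evtlP I φ ih =>
    intro h k
    simp [SatHT, SatC, ih h]
  | snce I φ ψ ihφ ihψ =>
    intro h k
    simp [SatHT, SatC, ihφ h.1, ihψ h.2]
  | init => intro h; exact absurd h (by simp [ImplFree])
  | fin => intro h; exact absurd h (by simp [ImplFree])
  | impl _ _ _ _ => intro h; exact absurd h (by simp [ImplFree])
  | wnext _ _ _ => intro h; exact absurd h (by simp [ImplFree])
  | alw _ _ _ => intro h; exact absurd h (by simp [ImplFree])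
  | rel _ _ _ _ _ => intro h; exact absurd h (by simp [ImplFree])
  | wprev _ _ _ => intro h; exact absurd h (by simp [ImplFree])
  | alwP _ _ _ => intro h; exact absurd h (by simp [ImplFree])
  | trig _ _ _ _ _ => intro h; exact absurd h (by simp [ImplFree])

/-- For unconditional metric formulas, MDL equivalence coincides with MDHT equivalence. -/
theorem uncond_mdl_equiv_iff_mdht_equiv {A : Type} (φ ψ : MF A)
    (hφ : ImplFree φ) (hψ : ImplFree ψ) :
    (∀ (lam : ℕ) (τ : ℕ → ℤ) (T : ℕ → Set A), Monotone τ →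
        ∀ k < lam, (SatC τ lam T k φ ↔ SatC τ lam T k ψ)) ↔
    (∀ (lam : ℕ) (τ : ℕ → ℤ) (H T : ℕ → Set A), Monotone τ → (∀ i, H i ⊆ T i) →
        ∀ k < lam, (SatHT τ lam H T k φ ↔ SatHT τ lam H T k ψ)) := by
  constructor
  · intro hC lam τ H T hτ _ k hk
    rw [implfree_satHT_iff_satC τ lam H T φ hφ k,
        implfree_satHT_iff_satC τ lam H T ψ hψ k]
    exact hC lam τ H hτ k hk
  · intro hHT lam τ T hτ k hk
    rw [← implfree_satHT_iff_satC τ lam T T φ hφ k,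
        ← implfree_satHT_iff_satC τ lam T T ψ hψ k]
    exact hHT lam τ T T hτ (fun i => le_refl _) k hk
end

section
/- The metric release equivalence φ R_I ψ ≡ (ψ U_I (φ ∧ ψ)) ∨ □_I ψ fails in metric HT: for the timed trace of length 3 with T_0 = {a}, T_1 = T_2 = ∅, τ(0)=0, τ(1)=1, τ(2)=4, and I = [3,5], the total trace satisfies a R_{[3,5]} b at 0, but satisfies neither b U_{[3,5]} (a ∧ b) nor □_{[3,5]} b at 0. -/
/-- The counterexample trace: atoms `a := true`, `b := false`;
`T 0 = {a}`, `T 1 = T 2 = ∅`; `τ(0)=0, τ(1)=1, τ(2)=4`. -/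
def ceT : ℕ → Set Bool := fun n => if n = 0 then {true} else ∅

def ceτ : ℕ → ℤ := fun n => if n = 0 then 0 else if n = 1 then 1 else 4

/-- The metric release equivalence `φ R_I ψ ≡ (ψ U_I (φ ∧ ψ)) ∨ □_I ψ` fails:
the trace satisfies `a R_{[3,5]} b` at 0 but neither `b U_{[3,5]} (a ∧ b)` nor
`□_{[3,5]} b` at 0. -/
theorem release_equiv_fails :
    Monotone ceτ ∧
    SatC ceτ 3 ceT 0 (.rel (Set.Icc 3 5) (.atom true) (.atom false)) ∧
    ¬ SatC ceτ 3 ceT 0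
        (.untl (Set.Icc 3 5) (.atom false) (.conj (.atom true) (.atom false))) ∧
    ¬ SatC ceτ 3 ceT 0 (.alw (Set.Icc 3 5) (.atom false)) := by
  refine ⟨?_, ?_, ?_, ?_⟩
  · intro m n h
    simp only [ceτ]
    split_ifs <;> omega
  · intro j hj hj3 hI
    right
    refine ⟨0, le_refl 0, ?_, rfl⟩
    -- j must be 2
    interval_cases j <;> simp [ceτ, Set.mem_Icc] at hI ⊢
  · rintro ⟨j, hj0, hj3, hI, ⟨_, hb⟩, _⟩
    have : false ∈ ceT j := hb
    simp [ceT] at this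
  · intro h
    have := h 2 (by omega) (by omega) (by simp [ceτ, Set.mem_Icc])
    simp [SatC, ceT] at this
end

section
/- Interval-anchored release decomposition: for any total timed trace and any point k, φ R_{[m,n)} ψ holds at k iff (□_{[m,n)} ψ ∨ ◇_{[0,m)} (φ R (φ ∨ ◯̂ ψ))) holds at k, where R without interval is release over [0,∞) and ◯̂ is untimed weak next. -/
/-- Interval-anchored release decomposition for `[m,n)` with `0 < m ≤ n`:
`φ R_{[m,n)} ψ ≡ □_{[m,n)} ψ ∨ ◇_{[0,m)} (φ R (φ ∨ ◯̂ ψ))`. -/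
theorem release_Ico_decomposition {A : Type} (T : ℕ → Set A) (τ : ℕ → ℤ) (lam : ℕ)
    (hτ : Monotone τ) (m n : ℤ) (hm : 0 < m) (hmn : m ≤ n)
    (φ ψ : MF A) (k : ℕ) (hk : k < lam) :
    SatC τ lam T k (.rel (Set.Ico m n) φ ψ) ↔
      SatC τ lam T k
        (.disj (.alw (Set.Ico m n) ψ)
          (.evtl (Set.Ico 0 m)
            (.rel (Set.Ici 0) φ (.disj φ (.wnext Set.univ ψ))))) := by
  classical
  simp only [SatC, Set.mem_Ico, Set.mem_Ici, Set.mem_univ, not_true, or_false]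
  constructor
  · intro hR
    by_cases hbox : ∀ i, k ≤ i → i < lam → m ≤ τ i - τ k ∧ τ i - τ k < n → SatC τ lam T i ψ
    · exact Or.inl hbox
    right
    push_neg at hbox
    obtain ⟨j0, hkj0, hj0lam, hj0I, hj0ψ⟩ := hbox
    obtain hψ | ⟨i0, hki0, hi0j0, hφi0⟩ := hR j0 hkj0 hj0lam hj0I
    · exact absurd hψ hj0ψ
    have hex : ∃ i, k ≤ i ∧ i < lam ∧ SatC τ lam T i φ :=
      ⟨i0, hki0, lt_trans hi0j0 hj0lam, hφi0⟩
    set i1 := Nat.find hex with hi1def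
    obtain ⟨hki1, hi1lam, hφi1⟩ := Nat.find_spec hex
    have hi1min : ∀ i, k ≤ i → i < lam → SatC τ lam T i φ → i1 ≤ i :=
      fun i h1 h2 h3 => Nat.find_le ⟨h1, h2, h3⟩
    have hi1i0 : i1 ≤ i0 := hi1min i0 hki0 (lt_trans hi0j0 hj0lam) hφi0
    by_cases hA : τ i1 - τ k < m
    · refine ⟨i1, hki1, hi1lam, ⟨by linarith [hτ hki1], hA⟩, fun j hij hjlam _ => ?_⟩
      rcases eq_or_lt_of_le hij with rfl | hlt
      · exact Or.inl (Or.inl hφi1)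
      · exact Or.inr ⟨i1, le_refl _, hlt, hφi1⟩
    · push_neg at hA
      have hi1j0 : i1 ≤ j0 := le_trans hi1i0 (le_of_lt hi0j0)
      have hi1n : τ i1 - τ k < n := lt_of_le_of_lt (by linarith [hτ hi1j0]) hj0I.2
      have hexs : ∃ s, ¬(s < lam ∧ τ s - τ k < m) :=
        ⟨i1, fun h => absurd h.2 (not_lt.mpr hA)⟩
      set s := Nat.find hexs with hsdef
      have hsspec := Nat.find_spec hexs
      have hsmin : ∀ i, i < s → i < lam ∧ τ i - τ k < m :=
        fun i h => not_not.mp (Nat.find_min hexs h)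
      have hks : k < s := by
        by_contra h
        push_neg at h
        exact hsspec ⟨lt_of_le_of_lt h hk, by linarith [hτ h]⟩
      have hsi1 : s ≤ i1 := Nat.find_le (fun h => absurd h.2 (not_lt.mpr hA))
      have hslam : s < lam := lt_of_le_of_lt hsi1 hi1lam
      have hsm : m ≤ τ s - τ k := by
        by_contra h
        push_neg at h
        exact hsspec ⟨hslam, h⟩
      have hstar := hsmin (s - 1) (by omega)
      refine ⟨s - 1, by omega, hstar.1, ⟨by linarith [hτ (show k ≤ s - 1 by omega)], hstar.2⟩,
        fun j hij hjlam _ => ?_⟩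
      rcases lt_trichotomy j i1 with hji1 | rfl | hi1j
      · have hj1i1 : j + 1 ≤ i1 := hji1
        have hj1lam : j + 1 < lam := lt_of_le_of_lt hj1i1 hi1lam
        have hsj1 : s ≤ j + 1 := by omega
        have hmj1 : m ≤ τ (j + 1) - τ k := le_trans hsm (by linarith [hτ hsj1])
        have hnj1 : τ (j + 1) - τ k < n := lt_of_le_of_lt (by linarith [hτ hj1i1]) hi1n
        obtain hψ' | ⟨i', hki', hi'j1, hφ'⟩ := hR (j + 1) (by omega) hj1lam ⟨hmj1, hnj1⟩
        · exact Or.inl (Or.inr (Or.inr hψ'))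
        · exact absurd (hi1min i' hki' (lt_trans hi'j1 hj1lam) hφ') (by omega)
      · exact Or.inl (Or.inl hφi1)
      · exact Or.inr ⟨i1, by omega, hi1j, hφi1⟩
  · rintro (hbox | ⟨i, hki, hilam, ⟨hi0, him⟩, hrel⟩) j hkj hjlam hjI
    · exact Or.inl (hbox j hkj hjlam hjI)
    · have hij : i < j := by
        by_contra h
        push_neg at h
        have := hτ h
        linarith [hjI.1]
      have hj1 : i ≤ j - 1 := by omega
      have hjj : j - 1 + 1 = j := by omega
      obtain h1 | ⟨i', hii', hi'j, hφ'⟩ :=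
        hrel (j - 1) hj1 (by omega) (by linarith [hτ hj1])
      · rw [hjj] at h1
        rcases h1 with hφ' | hlam | hψ'
        · exact Or.inr ⟨j - 1, by omega, by omega, hφ'⟩
        · omega
        · exact Or.inl hψ'
      · exact Or.inr ⟨i', by omega, by omega, hφ'⟩
end

section
/- Zero-anchored release decomposition: for any total timed trace and point k, φ R_{[0,n)} ψ holds at k iff (□_{[0,n)} ψ ∨ φ R ψ) holds at k, where R without interval is untimed release. -/
/-- Zero-anchored release decomposition: `φ R_{[0,n)} ψ ≡ □_{[0,n)} ψ ∨ φ R ψ`. -/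
theorem release_Ico_zero_decomposition {A : Type} (T : ℕ → Set A) (τ : ℕ → ℤ)
    (lam : ℕ) (hτ : Monotone τ) (n : ℤ) (φ ψ : MF A) (k : ℕ) (hk : k < lam) :
    SatC τ lam T k (.rel (Set.Ico 0 n) φ ψ) ↔
      SatC τ lam T k (.disj (.alw (Set.Ico 0 n) ψ) (.rel (Set.Ici 0) φ ψ)) := by
  simp only [SatC, Set.mem_Ico, Set.mem_Ici]
  constructor
  · intro h
    by_cases hall : ∀ j, k ≤ j → j < lam → 0 ≤ τ j - τ k ∧ τ j - τ k < n → SatC τ lam T j ψ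
    · exact Or.inl hall
    · right
      push_neg at hall
      obtain ⟨j0, hkj0, hj0lam, hmem, hψ⟩ := hall
      obtain ⟨i, hki, hij0, hφ⟩ := (h j0 hkj0 hj0lam hmem).resolve_left hψ
      intro j hkj hjlam _
      by_cases hlt : τ j - τ k < n
      · exact h j hkj hjlam ⟨sub_nonneg.mpr (hτ hkj), hlt⟩
      · right
        refine ⟨i, hki, lt_of_lt_of_le hij0 ?_, hφ⟩
        by_contra hle
        push_neg at hle
        exact hlt (lt_of_le_of_lt (sub_le_sub_right (hτ hle.le) _) hmem.2)
  · rintro (hall | hrel)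
    · intro j hkj hjlam hmem
      exact Or.inl (hall j hkj hjlam hmem)
    · intro j hkj hjlam hmem
      exact hrel j hkj hjlam hmem.1
end

section
/- In (untimed) dynamic/temporal HT, release is definable from until and always: for every timed HT-trace M and point k, M,k ⊨ φ R ψ iff M,k ⊨ (ψ U (φ ∧ ψ)) ∨ □ ψ, where all operators use the trivial interval (−∞,∞). -/
theorem SatHT_persist {A : Type} (τ : ℕ → ℤ) (lam : ℕ) (H T : ℕ → Set A)
    (hHT : ∀ i, H i ⊆ T i) :
    ∀ (φ : MF A) (k : ℕ), SatHT τ lam H T k φ → SatHT τ lam T T k φ := by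
  intro φ
  induction φ with
  | atom a => exact fun k h => hHT k h
  | bot => exact fun k h => h
  | init => exact fun k h => h
  | fin => exact fun k h => h
  | conj φ ψ ih1 ih2 => exact fun k h => ⟨ih1 k h.1, ih2 k h.2⟩
  | disj φ ψ ih1 ih2 =>
      exact fun k h => h.elim (fun x => Or.inl (ih1 k x)) (fun x => Or.inr (ih2 k x))
  | impl φ ψ ih1 ih2 => exact fun k h => ⟨h.2, h.2⟩
  | next I φ ih => exact fun k h => ⟨h.1, ih _ h.2.1, h.2.2⟩
  | wnext I φ ih => exact fun k h => ⟨h.2, h.2⟩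
  | evtl I φ ih => exact fun k h => h.elim (fun i hi => ⟨i, hi.1, hi.2.1, hi.2.2.1, ih i hi.2.2.2⟩)
  | alw I φ ih => exact fun k h => ⟨h.2, h.2⟩
  | untl I φ ψ ih1 ih2 =>
      exact fun k h => h.elim (fun j hj =>
        ⟨j, hj.1, hj.2.1, hj.2.2.1, ih2 j hj.2.2.2.1, fun i hi hij => ih1 i (hj.2.2.2.2 i hi hij)⟩)
  | rel I φ ψ ih1 ih2 => exact fun k h => ⟨h.2, h.2⟩
  | prev I φ ih => exact fun k h => ⟨h.1, ih _ h.2.1, h.2.2⟩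
  | wprev I φ ih => exact fun k h => ⟨h.2, h.2⟩
  | evtlP I φ ih => exact fun k h => h.elim (fun i hi => ⟨i, hi.1, hi.2.1, ih i hi.2.2⟩)
  | alwP I φ ih => exact fun k h => ⟨h.2, h.2⟩
  | snce I φ ψ ih1 ih2 =>
      exact fun k h => h.elim (fun j hj =>
        ⟨j, hj.1, hj.2.1, ih2 j hj.2.2.1, fun i hi hik => ih1 i (hj.2.2.2 i hi hik)⟩)
  | trig I φ ψ ih1 ih2 => exact fun k h => ⟨h.2, h.2⟩

/-- In untimed (trivial-interval) HT, release is definable: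
`φ R ψ ≡ (ψ U (φ ∧ ψ)) ∨ □ ψ`. -/
theorem untimed_release_def {A : Type} (H T : ℕ → Set A) (τ : ℕ → ℤ) (lam : ℕ)
    (hτ : Monotone τ) (hHT : ∀ i, H i ⊆ T i) (φ ψ : MF A) (k : ℕ) :
    SatHT τ lam H T k (.rel Set.univ φ ψ) ↔
      SatHT τ lam H T k
        (.disj (.untl Set.univ ψ (.conj φ ψ)) (.alw Set.univ ψ)) := by
  classical
  constructor
  · rintro ⟨hH, hT⟩
    by_cases hφ : ∃ i, k ≤ i ∧ i < lam ∧ SatHT τ lam H T i φ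
    · left
      set i0 := Nat.find hφ with hi0def
      obtain ⟨hki0, hi0l, hφ0⟩ := Nat.find_spec hφ
      have hmin : ∀ m, m < i0 → ¬(k ≤ m ∧ m < lam ∧ SatHT τ lam H T m φ) :=
        fun m hm => Nat.find_min hφ hm
      have hψ0 : SatHT τ lam H T i0 ψ := by
        rcases hH i0 hki0 hi0l trivial with h | ⟨i, hki, hii0, hφi⟩
        · exact h
        · exact absurd ⟨hki, lt_trans hii0 hi0l, hφi⟩ (hmin i hii0)
      refine ⟨i0, hki0, hi0l, trivial, ⟨hφ0, hψ0⟩, fun i hki hii0 => ?_⟩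
      rcases hH i hki (lt_trans hii0 hi0l) trivial with h | ⟨i', hki', hii', hφi'⟩
      · exact h
      · exact absurd ⟨hki', lt_trans (lt_trans hii' hii0) hi0l, hφi'⟩
          (hmin i' (lt_trans hii' hii0))
    · right
      have hψH : ∀ j, k ≤ j → j < lam → SatHT τ lam H T j ψ := by
        intro j hkj hjl
        rcases hH j hkj hjl trivial with h | ⟨i, hki, hij, hφi⟩
        · exact h
        · exact absurd ⟨i, hki, lt_trans hij hjl, hφi⟩ hφ
      exact ⟨fun i h1 h2 _ => hψH i h1 h2,
        fun i h1 h2 _ => SatHT_persist τ lam H T hHT ψ i (hψH i h1 h2)⟩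
  · rintro (⟨j0, hkj0, hj0l, -, ⟨hφj0, hψj0⟩, hbef⟩ | halw)
    · constructor
      · intro j hkj hjl _
        rcases lt_trichotomy j j0 with h | h | h
        · exact Or.inl (hbef j hkj h)
        · exact Or.inl (h ▸ hψj0)
        · exact Or.inr ⟨j0, hkj0, h, hφj0⟩
      · intro j hkj hjl _
        rcases lt_trichotomy j j0 with h | h | h
        · exact Or.inl (SatHT_persist τ lam H T hHT ψ j (hbef j hkj h))
        · exact Or.inl (h ▸ SatHT_persist τ lam H T hHT ψ j0 hψj0)
        · exact Or.inr ⟨j0, hkj0, h, SatHT_persist τ lam H T hHT φ j0 hφj0⟩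
    · exact ⟨fun j h1 h2 h3 => Or.inl (halw.1 j h1 h2 h3),
        fun j h1 h2 h3 => Or.inl (halw.2 j h1 h2 h3)⟩
end
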